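/- Let Λ be a finite dimensional algebra over an algebraically closed field k and e an idempotent of Λ. If ftors Λ is a lattice (respectively, a complete lattice), then ftors(Λ/⟨e⟩) is a lattice (respectively, a complete lattice), where ⟨e⟩ is the two-sided ideal generated by e; indeed ftors(Λ/⟨e⟩) is isomorphic to the interval {T ∈ ftors Λ | 0 ⊆ T ⊆ mod(Λ/⟨e⟩)} in ftors Λ. -/

import Mathlib

/-!
Restriction of scalars along `Λ → Λ/⟨e⟩` identifies `mod (Λ/⟨e⟩)` with the class `M` of
finite dimensional `Λ`-modules annihilated by `e`, and it matches functorially finite torsion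
classes on both sides: it sends `Fac X` to `Fac X`, and extension closure survives because
`e² = e` (if `e` kills both ends of `0 → X → Y → Z → 0`, then `eY ⊆ X`, so `eY = e²Y = 0`).
Hence `ftors (Λ/⟨e⟩)` is the interval below `M` in `ftors Λ`. A meet in the interval is the meet
in `ftors Λ` of the family together with `M`; a join is obtained from the join in `ftors Λ`
through the retraction `T ↦ T ∩ M`, which stays functorially finite as
`Fac X ∩ M = Fac (X / ΛeX)`.
-/

noncomputable section

namespace TorsionLattice


/-! ### Posets: meets and joins (as unique maximal/minimal bounds), semilattices -/

section Posets

variable {P : Type*} [PartialOrder P]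

/-- `m` is a maximal element of the subset `S`. -/
def MaximalIn (S : Set P) (m : P) : Prop := m ∈ S ∧ ∀ y ∈ S, m ≤ y → y = m

/-- `m` is a minimal element of the subset `S`. -/
def MinimalIn (S : Set P) (m : P) : Prop := m ∈ S ∧ ∀ y ∈ S, y ≤ m → y = m

/-- `m` is a meet of `S` : the unique maximal element of the set of lower bounds of `S`. -/
def IsMeetOf (S : Set P) (m : P) : Prop :=
  MaximalIn (lowerBounds S) m ∧ ∀ y, MaximalIn (lowerBounds S) y → y = m

/-- `m` is a join of `S` : the unique minimal element of the set of upper bounds of `S`. -/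
def IsJoinOf (S : Set P) (m : P) : Prop :=
  MinimalIn (upperBounds S) m ∧ ∀ y, MinimalIn (upperBounds S) y → y = m

def HasMeet (S : Set P) : Prop := ∃ m, IsMeetOf S m

def HasJoin (S : Set P) : Prop := ∃ m, IsJoinOf S m

end Posets

/-- Every finite subset has a meet. -/
def IsMeetSemilatticePoset (P : Type*) [PartialOrder P] : Prop :=
  ∀ S : Set P, S.Finite → HasMeet S

/-- Every finite subset has a join. -/
def IsJoinSemilatticePoset (P : Type*) [PartialOrder P] : Prop :=
  ∀ S : Set P, S.Finite → HasJoin S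

def IsLatticePoset (P : Type*) [PartialOrder P] : Prop :=
  IsJoinSemilatticePoset P ∧ IsMeetSemilatticePoset P

def IsCompleteMeetSemilatticePoset (P : Type*) [PartialOrder P] : Prop :=
  ∀ S : Set P, HasMeet S

def IsCompleteJoinSemilatticePoset (P : Type*) [PartialOrder P] : Prop :=
  ∀ S : Set P, HasJoin S

def IsCompleteLatticePoset (P : Type*) [PartialOrder P] : Prop :=
  ∀ S : Set P, HasMeet S ∧ HasJoin S

def PreservesMeets {P Q : Type*} [PartialOrder P] [PartialOrder Q] (f : P → Q) : Prop :=
  ∀ (S : Set P) (m : P), IsMeetOf S m → IsMeetOf (f '' S) (f m)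

def PreservesJoins {P Q : Type*} [PartialOrder P] [PartialOrder Q] (f : P → Q) : Prop :=
  ∀ (S : Set P) (m : P), IsJoinOf S m → IsJoinOf (f '' S) (f m)

/-! ### Torsion classes in `mod Λ`

We model the category `mod Λ` of finite dimensional (equivalently, finitely generated)
`Λ`-modules by the objects of `ModuleCat.{0} Λ` satisfying `Module.Finite Λ`.
Subcategories closed under isomorphisms are modelled as sets of objects. -/

section Torsion

variable (Λ : Type) [Ring Λ]

/-- `0 → X → Y → Z → 0` is a short exact sequence. -/
def IsSES {X Y Z : Type} [AddCommGroup X] [Module Λ X] [AddCommGroup Y] [Module Λ Y]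
    [AddCommGroup Z] [Module Λ Z] (f : X →ₗ[Λ] Y) (g : Y →ₗ[Λ] Z) : Prop :=
  Function.Injective f ∧ Function.Surjective g ∧ LinearMap.range f = LinearMap.ker g

/-- All members of `C` are finite (equivalently, finite dimensional) modules,
i.e. `C` is a subcategory of `mod Λ`. -/
def FinMods (C : Set (ModuleCat.{0} Λ)) : Prop := ∀ X ∈ C, Module.Finite Λ X

/-- `C` is closed under factor modules (in particular under isomorphisms). -/
def QuotClosed (C : Set (ModuleCat.{0} Λ)) : Prop :=
  ∀ X ∈ C, ∀ (Y : ModuleCat.{0} Λ) (f : ↥X →ₗ[Λ] ↥Y), Function.Surjective f → Y ∈ C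

/-- `C` is closed under submodules (in particular under isomorphisms). -/
def SubClosed (C : Set (ModuleCat.{0} Λ)) : Prop :=
  ∀ X ∈ C, ∀ (Y : ModuleCat.{0} Λ) (f : ↥Y →ₗ[Λ] ↥X), Function.Injective f → Y ∈ C

/-- `C` is closed under extensions. -/
def ExtClosed (C : Set (ModuleCat.{0} Λ)) : Prop :=
  ∀ (X Y Z : ModuleCat.{0} Λ) (f : ↥X →ₗ[Λ] ↥Y) (g : ↥Y →ₗ[Λ] ↥Z),
    IsSES Λ f g → X ∈ C → Z ∈ C → Y ∈ C

/-- A torsion class in `mod Λ`: a class of finite dimensional modules closed under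
factor modules, isomorphisms and extensions. -/
def IsTorsionClass (C : Set (ModuleCat.{0} Λ)) : Prop :=
  FinMods Λ C ∧ QuotClosed Λ C ∧ ExtClosed Λ C

/-- A torsionfree class in `mod Λ`: a class of finite dimensional modules closed under
submodules, isomorphisms and extensions. -/
def IsTorsionFreeClass (C : Set (ModuleCat.{0} Λ)) : Prop :=
  FinMods Λ C ∧ SubClosed Λ C ∧ ExtClosed Λ C

/-- `Fac X`: factor modules of finite direct sums of copies of `X`. -/
def Fac (X : ModuleCat.{0} Λ) : Set (ModuleCat.{0} Λ) :=
  {Y | ∃ (n : ℕ) (f : (Fin n → ↥X) →ₗ[Λ] ↥Y), Function.Surjective f}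

/-- `C` is of the form `Fac X` for a finite dimensional module `X`; for a torsion class
this means precisely that `C` is functorially finite in `mod Λ`. -/
def IsFacFinite (C : Set (ModuleCat.{0} Λ)) : Prop :=
  ∃ X : ModuleCat.{0} Λ, Module.Finite Λ X ∧ C = Fac Λ X

/-- A functorially finite torsion class in `mod Λ`. -/
def IsFTorsionClass (C : Set (ModuleCat.{0} Λ)) : Prop :=
  IsTorsionClass Λ C ∧ IsFacFinite Λ C

/-- The poset `tors Λ` of torsion classes, ordered by inclusion. -/
abbrev Tors := {C : Set (ModuleCat.{0} Λ) // IsTorsionClass Λ C}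

/-- The poset `torf Λ` of torsionfree classes, ordered by inclusion. -/
abbrev Torf := {C : Set (ModuleCat.{0} Λ) // IsTorsionFreeClass Λ C}

/-- The poset `ftors Λ` of functorially finite torsion classes, ordered by inclusion. -/
abbrev FTors := {C : Set (ModuleCat.{0} Λ) // IsFTorsionClass Λ C}

/-- `C^⊥ = {X ∈ mod Λ ∣ Hom(C, X) = 0}`. -/
def rperp (C : Set (ModuleCat.{0} Λ)) : Set (ModuleCat.{0} Λ) :=
  {X | Module.Finite Λ X ∧ ∀ T ∈ C, ∀ f : ↥T →ₗ[Λ] ↥X, f = 0}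

/-- `^⊥C = {X ∈ mod Λ ∣ Hom(X, C) = 0}`. -/
def lperp (C : Set (ModuleCat.{0} Λ)) : Set (ModuleCat.{0} Λ) :=
  {X | Module.Finite Λ X ∧ ∀ T ∈ C, ∀ f : ↥X →ₗ[Λ] ↥T, f = 0}

/-- The intersection, inside `mod Λ`, of a family of subcategories of `mod Λ`. -/
def interMod (𝒮 : Set (Set (ModuleCat.{0} Λ))) : Set (ModuleCat.{0} Λ) :=
  {X | Module.Finite Λ X ∧ ∀ C ∈ 𝒮, X ∈ C}

/-- `Hom_Λ(X, Y) = 0`. -/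
def HomZero (X Y : ModuleCat.{0} Λ) : Prop := ∀ f : ↥X →ₗ[Λ] ↥Y, f = 0

/-- `X` is an indecomposable module: it is nonzero and its endomorphism ring has no
nontrivial idempotents. -/
def Indecomp (X : ModuleCat.{0} Λ) : Prop :=
  Nontrivial ↥X ∧ ∀ e : ↥X →ₗ[Λ] ↥X, e ∘ₗ e = e → e = 0 ∨ e = LinearMap.id

/-- `Ext¹_Λ(X, Y) ≠ 0` : there is a non-split short exact sequence `0 → Y → E → X → 0`. -/
def Ext1Nonzero (X Y : ModuleCat.{0} Λ) : Prop :=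
  ∃ (E : ModuleCat.{0} Λ) (f : ↥Y →ₗ[Λ] ↥E) (g : ↥E →ₗ[Λ] ↥X),
    IsSES Λ f g ∧ ¬∃ s : ↥X →ₗ[Λ] ↥E, g ∘ₗ s = LinearMap.id

/-- `X` is rigid : `Ext¹_Λ(X, X) = 0`. -/
def IsRigid (X : ModuleCat.{0} Λ) : Prop := ¬ Ext1Nonzero Λ X X

end Torsion

section Statement6

/-- The quotient of `Λ` by the two-sided ideal `⟨e⟩` generated by `e`. -/
abbrev IdemQuot (Λ : Type) [Ring Λ] (e : Λ) : Type :=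
  (TwoSidedIdeal.span {e} : TwoSidedIdeal Λ).ringCon.Quotient

section Posets

open Set Function

variable {α β : Type*} [PartialOrder α] [PartialOrder β]

theorem hasMeet_of_lowerBounds_eq_image (f : α ↪o β) {S : Set α} {T : Set β}
    (hT : lowerBounds T = f '' lowerBounds S) (h : HasMeet T) : HasMeet S := by
  obtain ⟨m, ⟨hm, hmax⟩, huniq⟩ := h
  rw [hT] at hm hmax huniq
  obtain ⟨m, hm, rfl⟩ := hm
  have maximal_image {y : α} (hy : MaximalIn (lowerBounds S) y) :
      MaximalIn (f '' lowerBounds S) (f y) := by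
    refine ⟨mem_image_of_mem f hy.1, ?_⟩
    rintro _ ⟨z, hz, rfl⟩ hyz
    rw [hy.2 z hz (f.le_iff_le.1 hyz)]
  refine ⟨m, ⟨hm, fun y hy hmy => ?_⟩, fun y hy => f.injective (huniq _ (maximal_image hy))⟩
  exact f.injective (hmax _ (mem_image_of_mem f hy) (f.monotone hmy))

theorem GaloisConnection.hasJoin_of_hasJoin_image {l : α → β} {u : β → α}
    (gc : GaloisConnection l u) (hl : Injective l) {S : Set α} (h : HasJoin (l '' S)) :
    HasJoin S := by
  obtain ⟨j, ⟨hj, hmin⟩, huniq⟩ := h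
  have hul (a : α) : u (l a) = a :=
    hl (le_antisymm (gc.l_u_le _) (gc.monotone_l (gc.le_u_l a)))
  have upper_l {a : α} (ha : a ∈ upperBounds S) : l a ∈ upperBounds (l '' S) := by
    rintro _ ⟨s, hs, rfl⟩
    exact gc.monotone_l (ha hs)
  have upper_u {b : β} (hb : b ∈ upperBounds (l '' S)) : u b ∈ upperBounds S :=
    fun s hs => gc.le_u (hb (mem_image_of_mem l hs))
  refine ⟨u j, ⟨upper_u hj, fun a ha haj => ?_⟩, fun a ha => ?_⟩
  · have hlj : l a = j := hmin _ (upper_l ha) ((gc.monotone_l haj).trans (gc.l_u_le j))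
    rw [← hlj, hul]
  · have hla : MinimalIn (upperBounds (l '' S)) (l a) := by
      refine ⟨upper_l ha.1, fun b hb hba => le_antisymm hba ?_⟩
      have hub : u b = a := ha.2 _ (upper_u hb) (by simpa only [hul] using gc.monotone_u hba)
      exact hub ▸ gc.l_u_le b
    rw [← huniq _ hla, hul]

theorem OrderIso.hasMeet_of_symm_image (φ : α ≃o β) {S : Set β} (h : HasMeet (φ.symm '' S)) :
    HasMeet S :=
  hasMeet_of_lowerBounds_eq_image φ.symm.toOrderEmbedding φ.symm.lowerBounds_image h

theorem OrderIso.hasJoin_of_symm_image (φ : α ≃o β) {S : Set β} (h : HasJoin (φ.symm '' S)) :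
    HasJoin S :=
  GaloisConnection.hasJoin_of_hasJoin_image φ.symm.to_galoisConnection φ.symm.injective h

theorem OrderIso.isLatticePoset (φ : α ≃o β) (h : IsLatticePoset α) : IsLatticePoset β :=
  ⟨fun _ hS => OrderIso.hasJoin_of_symm_image φ (h.1 _ (hS.image _)),
    fun _ hS => OrderIso.hasMeet_of_symm_image φ (h.2 _ (hS.image _))⟩

theorem OrderIso.isCompleteLatticePoset (φ : α ≃o β) (h : IsCompleteLatticePoset α) :
    IsCompleteLatticePoset β :=
  fun _ =>
    ⟨OrderIso.hasMeet_of_symm_image φ (h _).1, OrderIso.hasJoin_of_symm_image φ (h _).2⟩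

theorem hasMeet_Iic {M : α} {S : Set (Iic M)} (h : HasMeet (Subtype.val '' S ∪ {M})) :
    HasMeet S := by
  refine hasMeet_of_lowerBounds_eq_image (OrderEmbedding.subtype _) ?_ h
  ext x
  simp only [lowerBounds_union, lowerBounds_singleton]
  constructor
  · rintro ⟨hx, hxM⟩
    exact ⟨⟨x, hxM⟩, fun s hs => hx (mem_image_of_mem _ hs), rfl⟩
  · rintro ⟨y, hy, rfl⟩
    refine ⟨?_, y.2⟩
    rintro _ ⟨s, hs, rfl⟩
    exact hy hs

theorem hasJoin_Iic {M : α} {r : α → Iic M} (gc : GaloisConnection (↑) r) {S : Set (Iic M)}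
    (h : HasJoin (Subtype.val '' S)) : HasJoin S :=
  GaloisConnection.hasJoin_of_hasJoin_image gc Subtype.val_injective h

theorem isLatticePoset_Iic {M : α} {r : α → Iic M} (gc : GaloisConnection (↑) r)
    (h : IsLatticePoset α) : IsLatticePoset (Iic M) :=
  ⟨fun _ hS => hasJoin_Iic gc (h.1 _ (hS.image _)),
    fun _ hS => hasMeet_Iic (h.2 _ ((hS.image _).union (finite_singleton M)))⟩

theorem isCompleteLatticePoset_Iic {M : α} {r : α → Iic M} (gc : GaloisConnection (↑) r)
    (h : IsCompleteLatticePoset α) : IsCompleteLatticePoset (Iic M) :=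
  fun _ => ⟨hasMeet_Iic (h _).1, hasJoin_Iic gc (h _).2⟩

end Posets

section Annihilation

variable {R : Type} [Ring R] {a : R} {X Y Z : Type} [AddCommGroup X] [Module R X]
  [AddCommGroup Y] [Module R Y] [AddCommGroup Z] [Module R Z]

theorem smul_eq_zero_of_surjective (hX : ∀ x : X, a • x = 0) {f : X →ₗ[R] Y}
    (hf : Function.Surjective f) (y : Y) : a • y = 0 := by
  obtain ⟨x, rfl⟩ := hf y
  rw [← map_smul, hX, map_zero]

theorem smul_eq_zero_of_isSES (ha : a * a = a) {f : X →ₗ[R] Y} {g : Y →ₗ[R] Z}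
    (hfg : IsSES R f g) (hX : ∀ x : X, a • x = 0) (hZ : ∀ z : Z, a • z = 0) (y : Y) :
    a • y = 0 := by
  obtain ⟨x, hx⟩ : a • y ∈ LinearMap.range f := by
    rw [hfg.2.2, LinearMap.mem_ker, map_smul, hZ]
  rw [← ha, mul_smul, ← hx, ← map_smul, hX, map_zero]

theorem smul_eq_zero_of_mem_fac {X Y : ModuleCat.{0} R} (hX : ∀ x : X, a • x = 0)
    (hY : Y ∈ Fac R X) (y : Y) : a • y = 0 := by
  obtain ⟨n, f, hf⟩ := hY
  exact smul_eq_zero_of_surjective (fun v => funext fun i => hX (v i)) hf y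

end Annihilation

section Fac

variable {R : Type} [Ring R]

theorem mem_fac_self (X : ModuleCat.{0} R) : X ∈ Fac R X :=
  ⟨1, LinearMap.proj 0, fun x => ⟨fun _ => x, rfl⟩⟩

theorem finite_of_mem_fac {X Y : ModuleCat.{0} R} [Module.Finite R X] (hY : Y ∈ Fac R X) :
    Module.Finite R Y := by
  obtain ⟨n, f, hf⟩ := hY
  exact Module.Finite.of_surjective f hf

theorem fac_subset_fac_of_surjective {X X' : ModuleCat.{0} R} {p : X →ₗ[R] X'}
    (hp : Function.Surjective p) : Fac R X' ⊆ Fac R X := by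
  rintro Y ⟨n, f, hf⟩
  exact ⟨n, f ∘ₗ LinearMap.piMap fun _ => p, hf.comp (.piMap fun _ => hp)⟩

theorem mem_fac_quotient {X Y : ModuleCat.{0} R} (N : Submodule R X) (hY : Y ∈ Fac R X)
    (hN : ∀ f : X →ₗ[R] Y, N ≤ LinearMap.ker f) :
    Y ∈ Fac R (ModuleCat.of R (X ⧸ N)) := by
  obtain ⟨n, f, hf⟩ := hY
  let F : (Fin n → X ⧸ N) →ₗ[R] Y :=
    LinearMap.lsum R _ ℕ fun i => N.liftQ (f ∘ₗ LinearMap.single R (fun _ => X) i) (hN _)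
  have hF : F ∘ₗ LinearMap.piMap (fun _ => N.mkQ) = f := by
    ext i x
    simp [F, ← map_sum, Finset.univ_sum_single]
  exact ⟨n, F, Function.Surjective.of_comp (hF ▸ hf)⟩

theorem mem_fac_regular_iff {X : ModuleCat.{0} R} :
    X ∈ Fac R (ModuleCat.of R R) ↔ Module.Finite R X :=
  ⟨fun h => finite_of_mem_fac h, fun _ => Module.Finite.exists_fin' R X⟩

theorem isFTorsionClass_setOf_finite : IsFTorsionClass R {X | Module.Finite R X} := by
  refine ⟨⟨fun _ hX => hX, ?_, ?_⟩, ModuleCat.of R R, Module.Finite.self R,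
    Set.ext fun _ => mem_fac_regular_iff.symm⟩
  · intro _ (_ : Module.Finite R _) _ f hf
    exact Module.Finite.of_surjective f hf
  · intro _ _ _ f g hfg (_ : Module.Finite R _) (_ : Module.Finite R _)
    exact Module.Finite.of_exact (LinearMap.exact_iff.2 hfg.2.2.symm) hfg.2.1

theorem IsTorsionClass.inter {C D : Set (ModuleCat.{0} R)} (hC : IsTorsionClass R C)
    (hD : IsTorsionClass R D) : IsTorsionClass R (C ∩ D) :=
  ⟨fun X hX => hC.1 X hX.1,
    fun X hX Y f hf => ⟨hC.2.1 X hX.1 Y f hf, hD.2.1 X hX.2 Y f hf⟩,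
    fun X Y Z f g hfg hX hZ =>
      ⟨hC.2.2 X Y Z f g hfg hX.1 hZ.1, hD.2.2 X Y Z f g hfg hX.2 hZ.2⟩⟩

end Fac

abbrev IdemQuot.mk (Λ : Type) [Ring Λ] (e : Λ) : Λ →+* IdemQuot Λ e :=
  RingCon.mk' _

namespace IdemQuot

variable {Λ : Type} [Ring Λ] {e : Λ}

instance : RingHomSurjective (IdemQuot.mk Λ e) := ⟨RingCon.mk'_surjective _⟩

theorem mk_self : IdemQuot.mk Λ e e = 0 :=
  (RingCon.eq _).2 <| ((TwoSidedIdeal.span {e}).rel_iff e 0).2 <| by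
    rw [sub_zero]
    exact TwoSidedIdeal.subset_span rfl

def restrict (X : ModuleCat.{0} (IdemQuot Λ e)) : ModuleCat.{0} Λ :=
  (ModuleCat.restrictScalars (IdemQuot.mk Λ e)).obj X

theorem restrict_smul_self (X : ModuleCat.{0} (IdemQuot Λ e)) (m : restrict X) : e • m = 0 :=
  show IdemQuot.mk Λ e e • (show X from m) = 0 by rw [mk_self, zero_smul]

def lift {X : Type} [AddCommGroup X] [Module Λ X] (hX : ∀ m : X, e • m = 0) :
    IdemQuot Λ e →+* AddMonoid.End X :=
  RingCon.lift _ (Module.toAddMonoidEnd Λ X) fun a b hab => by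
    have hspan : TwoSidedIdeal.span {e} ≤ TwoSidedIdeal.ker (Module.toAddMonoidEnd Λ X) :=
      TwoSidedIdeal.span_le.2 <| Set.singleton_subset_iff.2 <|
        (TwoSidedIdeal.mem_ker _).2 <| AddMonoidHom.ext hX
    exact TwoSidedIdeal.ringCon_le_iff.1 hspan hab

def descend (X : ModuleCat.{0} Λ) (hX : ∀ m : X, e • m = 0) : ModuleCat.{0} (IdemQuot Λ e) :=
  letI := Module.compHom X (lift hX)
  ModuleCat.of _ X

theorem restrict_descend (X : ModuleCat.{0} Λ) (hX : ∀ m : X, e • m = 0) :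
    restrict (descend X hX) = X :=
  rfl

theorem descend_restrict (X : ModuleCat.{0} (IdemQuot Λ e))
    (hX : ∀ m : restrict X, e • m = 0) :
    descend (restrict X) hX = X := by
  obtain ⟨X, _, _⟩ := X
  dsimp only [descend, restrict, ModuleCat.of]
  congr 1
  refine Module.ext' _ _ fun q m => ?_
  induction q using Quotient.inductionOn with
  | h a => rfl

theorem restrict_injective : Function.Injective (restrict (Λ := Λ) (e := e)) := fun X Y h =>
  calc X = descend (restrict X) (restrict_smul_self X) := (descend_restrict X _).symm
    _ = descend (restrict Y) (restrict_smul_self Y) := by congr 1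
    _ = Y := descend_restrict Y _

theorem mem_range_restrict_iff {X : ModuleCat.{0} Λ} :
    X ∈ Set.range (restrict (e := e)) ↔ ∀ m : X, e • m = 0 :=
  ⟨by rintro ⟨X', rfl⟩; exact restrict_smul_self X',
    fun hX => ⟨descend X hX, restrict_descend X hX⟩⟩

theorem finite_restrict_iff {X : ModuleCat.{0} (IdemQuot Λ e)} :
    Module.Finite Λ (restrict X) ↔ Module.Finite (IdemQuot Λ e) X :=
  LinearMap.finite_iff_of_bijective (σ := IdemQuot.mk Λ e) (M := restrict X) (P := X)
    { toFun := id, map_add' := fun _ _ => rfl, map_smul' := fun _ _ => rfl } Function.bijective_id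

def restrictLinearMap {X Y : ModuleCat.{0} (IdemQuot Λ e)} :
    (X →ₗ[IdemQuot Λ e] Y) ≃ (restrict X →ₗ[Λ] restrict Y) where
  toFun f :=
    { toFun := f, map_add' := f.map_add, map_smul' := fun a => f.map_smul (IdemQuot.mk Λ e a) }
  invFun f :=
    { toFun := f, map_add' := f.map_add,
      map_smul' := fun q m => Quotient.inductionOn q fun a => f.map_smul a m }

theorem isSES_restrictLinearMap_iff {X Y Z : ModuleCat.{0} (IdemQuot Λ e)}
    (f : X →ₗ[IdemQuot Λ e] Y) (g : Y →ₗ[IdemQuot Λ e] Z) :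
    IsSES Λ (restrictLinearMap f) (restrictLinearMap g) ↔ IsSES (IdemQuot Λ e) f g := by
  simp only [IsSES, SetLike.ext_iff, LinearMap.mem_range, LinearMap.mem_ker]
  rfl

theorem image_restrict_fac (X : ModuleCat.{0} (IdemQuot Λ e)) :
    restrict '' Fac (IdemQuot Λ e) X = Fac Λ (restrict X) := by
  ext Y
  constructor
  · rintro ⟨Y, ⟨n, f, hf⟩, rfl⟩
    exact ⟨n, restrictLinearMap (X := ModuleCat.of _ (Fin n → X)) f, hf⟩
  · intro hY
    obtain ⟨Y, rfl⟩ :=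
      mem_range_restrict_iff.2 (smul_eq_zero_of_mem_fac (restrict_smul_self X) hY)
    obtain ⟨n, f, hf⟩ := hY
    exact ⟨Y, ⟨n, (restrictLinearMap (X := ModuleCat.of _ (Fin n → X)) (Y := Y)).symm f, hf⟩,
      rfl⟩

theorem isTorsionClass_image_restrict_iff (he : e * e = e)
    {C : Set (ModuleCat.{0} (IdemQuot Λ e))} :
    IsTorsionClass Λ (restrict '' C) ↔ IsTorsionClass (IdemQuot Λ e) C := by
  have mem_image {X} : restrict X ∈ restrict '' C ↔ X ∈ C := restrict_injective.mem_set_image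
  constructor
  · rintro ⟨hfin, hquot, hext⟩
    refine ⟨fun X hX => finite_restrict_iff.1 (hfin _ (mem_image.2 hX)),
      fun X hX Y f hf => ?_, fun X Y Z f g hfg hX hZ => ?_⟩
    · exact mem_image.1 (hquot _ (mem_image.2 hX) _ (restrictLinearMap f) hf)
    · exact mem_image.1 (hext _ _ _ (restrictLinearMap f) (restrictLinearMap g)
        ((isSES_restrictLinearMap_iff f g).2 hfg) (mem_image.2 hX) (mem_image.2 hZ))
  · rintro ⟨hfin, hquot, hext⟩
    refine ⟨?_, ?_, ?_⟩
    · rintro _ ⟨X, hX, rfl⟩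
      exact finite_restrict_iff.2 (hfin X hX)
    · rintro _ ⟨X, hX, rfl⟩ Y f hf
      obtain ⟨Y, rfl⟩ :=
        mem_range_restrict_iff.2 (smul_eq_zero_of_surjective (restrict_smul_self X) hf)
      exact mem_image.2 (hquot X hX Y (restrictLinearMap.symm f) hf)
    · rintro _ Y _ f g hfg ⟨X, hX, rfl⟩ ⟨Z, hZ, rfl⟩
      obtain ⟨Y, rfl⟩ := mem_range_restrict_iff.2
        (smul_eq_zero_of_isSES he hfg (restrict_smul_self X) (restrict_smul_self Z))
      refine mem_image.2 (hext X Y Z (restrictLinearMap.symm f) (restrictLinearMap.symm g) ?_ hX hZ)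
      rwa [← isSES_restrictLinearMap_iff, Equiv.apply_symm_apply, Equiv.apply_symm_apply]

theorem isFacFinite_image_restrict_iff {C : Set (ModuleCat.{0} (IdemQuot Λ e))} :
    IsFacFinite Λ (restrict '' C) ↔ IsFacFinite (IdemQuot Λ e) C := by
  constructor
  · rintro ⟨X, hX, hC⟩
    obtain ⟨X, -, rfl⟩ : X ∈ restrict '' C := hC ▸ mem_fac_self X
    refine ⟨X, finite_restrict_iff.1 hX, restrict_injective.image_injective ?_⟩
    rw [hC, image_restrict_fac]
  · rintro ⟨X, hX, rfl⟩
    exact ⟨restrict X, finite_restrict_iff.2 hX, image_restrict_fac X⟩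

theorem isFTorsionClass_image_restrict_iff (he : e * e = e)
    {C : Set (ModuleCat.{0} (IdemQuot Λ e))} :
    IsFTorsionClass Λ (restrict '' C) ↔ IsFTorsionClass (IdemQuot Λ e) C :=
  and_congr (isTorsionClass_image_restrict_iff he) isFacFinite_image_restrict_iff

def ftorsEquiv (he : e * e = e) :
    FTors (IdemQuot Λ e) ≃o {T : FTors Λ // ∀ X ∈ T.val, ∀ m : X, e • m = 0} where
  toFun C := ⟨⟨restrict '' C.1, (isFTorsionClass_image_restrict_iff he).2 C.2⟩, by
    rintro _ ⟨X, -, rfl⟩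
    exact restrict_smul_self X⟩
  invFun T := ⟨restrict ⁻¹' T.1.1, (isFTorsionClass_image_restrict_iff he).1 <| by
    rw [Set.image_preimage_eq_of_subset fun X hX => mem_range_restrict_iff.2 (T.2 X hX)]
    exact T.1.2⟩
  left_inv C := Subtype.ext (Set.preimage_image_eq _ restrict_injective)
  right_inv T := Subtype.ext <| Subtype.ext <|
    Set.image_preimage_eq_of_subset fun X hX => mem_range_restrict_iff.2 (T.2 X hX)
  map_rel_iff' := Set.image_subset_image_iff restrict_injective

variable (Λ e) in
def modQuot : Set (ModuleCat.{0} Λ) :=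
  {X | Module.Finite Λ X ∧ ∀ m : X, e • m = 0}

theorem image_restrict_setOf_finite :
    restrict '' {X : ModuleCat.{0} (IdemQuot Λ e) | Module.Finite (IdemQuot Λ e) X} =
      modQuot Λ e := by
  ext X
  constructor
  · rintro ⟨X, hX, rfl⟩
    exact ⟨finite_restrict_iff.2 hX, restrict_smul_self X⟩
  · rintro ⟨hX, hXe⟩
    obtain ⟨X, rfl⟩ := mem_range_restrict_iff.2 hXe
    exact ⟨X, finite_restrict_iff.1 hX, rfl⟩

theorem isFTorsionClass_modQuot (he : e * e = e) : IsFTorsionClass Λ (modQuot Λ e) := by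
  rw [← image_restrict_setOf_finite]
  exact (isFTorsionClass_image_restrict_iff he).2 isFTorsionClass_setOf_finite

theorem fac_inter_modQuot (X : ModuleCat.{0} Λ) [Module.Finite Λ X] :
    Fac Λ X ∩ modQuot Λ e =
      Fac Λ (ModuleCat.of Λ (X ⧸ Submodule.span Λ (Set.range (e • · : X → X)))) := by
  set N := Submodule.span Λ (Set.range (e • · : X → X))
  have hN (x : X ⧸ N) : e • x = 0 := by
    obtain ⟨x, rfl⟩ := N.mkQ_surjective x
    rw [← map_smul, N.mkQ_apply, Submodule.Quotient.mk_eq_zero]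
    exact Submodule.subset_span ⟨x, rfl⟩
  ext Y
  constructor
  · rintro ⟨hY, -, hYe⟩
    refine mem_fac_quotient N hY fun f => Submodule.span_le.2 ?_
    rintro _ ⟨x, rfl⟩
    rw [SetLike.mem_coe, LinearMap.mem_ker, map_smul, hYe]
  · intro hY
    exact ⟨fac_subset_fac_of_surjective N.mkQ_surjective hY, finite_of_mem_fac hY,
      smul_eq_zero_of_mem_fac hN hY⟩

theorem isFTorsionClass_inter_modQuot (he : e * e = e) {T : Set (ModuleCat.{0} Λ)}
    (hT : IsFTorsionClass Λ T) : IsFTorsionClass Λ (T ∩ modQuot Λ e) := by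
  obtain ⟨hT, X, hX, rfl⟩ := hT
  exact ⟨hT.inter (isFTorsionClass_modQuot he).1, _, inferInstance, fac_inter_modQuot X⟩

def modQuotFTors (he : e * e = e) : FTors Λ :=
  ⟨modQuot Λ e, isFTorsionClass_modQuot he⟩

def intervalEquivIic (he : e * e = e) :
    {T : FTors Λ // ∀ X ∈ T.val, ∀ m : X, e • m = 0} ≃o Set.Iic (modQuotFTors he) :=
  OrderIso.setCongr _ _ <| Set.ext fun T =>
    ⟨fun h X hX => ⟨T.2.1.1 X hX, h X hX⟩, fun h _ hX => (h hX).2⟩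

def interModQuot (he : e * e = e) (T : FTors Λ) : Set.Iic (modQuotFTors he) :=
  ⟨⟨T.1 ∩ modQuot Λ e, isFTorsionClass_inter_modQuot he T.2⟩, Set.inter_subset_right⟩

theorem gc_interModQuot (he : e * e = e) : GaloisConnection (↑) (interModQuot he) :=
  fun S _ => (Set.subset_inter_iff.trans (and_iff_left S.2)).symm

end IdemQuot

theorem idempotent_quotient_lattice_general (Λ : Type) [Ring Λ] (e : Λ) (he : e * e = e) :
    Nonempty
      (FTors (IdemQuot Λ e) ≃o
        {T : FTors Λ // ∀ X ∈ T.val, ∀ m : ↥X, e • m = 0}) ∧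
    (IsLatticePoset (FTors Λ) → IsLatticePoset (FTors (IdemQuot Λ e))) ∧
    (IsCompleteLatticePoset (FTors Λ) →
      IsCompleteLatticePoset (FTors (IdemQuot Λ e))) := by
  let φ := (IdemQuot.ftorsEquiv he).trans (IdemQuot.intervalEquivIic he)
  have gc := IdemQuot.gc_interModQuot he
  exact ⟨⟨IdemQuot.ftorsEquiv he⟩,
    fun h => OrderIso.isLatticePoset φ.symm (isLatticePoset_Iic gc h),
    fun h => OrderIso.isCompleteLatticePoset φ.symm (isCompleteLatticePoset_Iic gc h)⟩

/-- **Proposition 1.7.** Let `e` be an idempotent of `Λ`. Then `ftors (Λ/⟨e⟩)` is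
isomorphic, as a poset, to the interval
`{T ∈ ftors Λ ∣ 0 ⊆ T ⊆ mod (Λ/⟨e⟩)}` in `ftors Λ` (where `mod (Λ/⟨e⟩)` is identified
with the modules annihilated by `e`); in particular, if `ftors Λ` is a lattice
(respectively a complete lattice), then so is `ftors (Λ/⟨e⟩)`. -/
theorem idempotent_quotient_lattice (k Λ : Type) [Field k] [IsAlgClosed k]
    [Ring Λ] [Algebra k Λ] [FiniteDimensional k Λ] (e : Λ) (he : e * e = e) :
    Nonempty
      (FTors (IdemQuot Λ e) ≃o
        {T : FTors Λ // ∀ X ∈ T.val, ∀ m : ↥X, e • m = 0}) ∧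
    (IsLatticePoset (FTors Λ) → IsLatticePoset (FTors (IdemQuot Λ e))) ∧
    (IsCompleteLatticePoset (FTors Λ) →
      IsCompleteLatticePoset (FTors (IdemQuot Λ e))) :=
  idempotent_quotient_lattice_general Λ e he

end Statement6
end TorsionLattice
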